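/- Every member of the behavioral naturals is observationally equivalent to a standard numeral: for the program P containing {Zero.z.s → z, S.x.z.s → s.x}, define ⟦ℕ⟧ as the least set of terms such that M ∈ ⟦ℕ⟧ iff either (∀ z s, M.z.s →* z) or (∃ x ∈ ⟦ℕ⟧, ∀ z s, M.z.s →* s.x). Then for every M ∈ ⟦ℕ⟧ there exists a natural number k with M ≈_P ⟨k⟩, where ⟨0⟩ = Zero and ⟨k+1⟩ = S.⟨k⟩. -/

import Mathlib

/-- Terms of continuation calculus: names (coded as naturals) and dot. -/
inductive Tm where
  | name : ℕ → Tm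
  | dot : Tm → Tm → Tm
deriving DecidableEq

/-- Right-hand sides of rules: names, variables (de Bruijn-style indices
into the left-hand side's variable list), and dot. -/
inductive Rhs where
  | name : ℕ → Rhs
  | var : ℕ → Rhs
  | dot : Rhs → Rhs → Rhs
deriving DecidableEq

/-- A rule `n.x₁.⋯.xₖ → r`: head name, arity `k`, and right-hand side. -/
structure Rule where
  head : ℕ
  arity : ℕ
  rhs : Rhs
deriving DecidableEq

/-- A program is a finite set of rules. -/
abbrev Program := Finset Rule

/-- Variables occurring in a right-hand side. -/
def Rhs.HasVar : Rhs → ℕ → Prop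
  | .name _, _ => False
  | .var w, v => w = v
  | .dot a b, v => a.HasVar v ∨ b.HasVar v

/-- Well-formedness: every variable of a right-hand side occurs in the
left-hand side, and there is at most one rule per head name. -/
def Program.Wf (P : Program) : Prop :=
  (∀ r ∈ P, ∀ v, r.rhs.HasVar v → v < r.arity) ∧
  (∀ r₁ ∈ P, ∀ r₂ ∈ P, r₁.head = r₂.head → r₁ = r₂)

/-- `n.t₁.⋯.tₖ` : left-associated application of a term to a list of terms. -/
def Tm.apps : Tm → List Tm → Tm
  | h, [] => h
  | h, t :: ts => Tm.apps (h.dot t) ts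

/-- Instantiation of a right-hand side with the terms matched by the
left-hand side variables; fails if some variable is out of range. -/
def Rhs.inst (ts : List Tm) : Rhs → Option Tm
  | .name n => some (.name n)
  | .var v => ts[v]?
  | .dot a b => do pure (.dot (← a.inst ts) (← b.inst ts))

/-- One-step evaluation `M →_P N`. -/
def Step (P : Program) (M N : Tm) : Prop :=
  ∃ r ∈ P, ∃ ts : List Tm, ts.length = r.arity ∧
    M = Tm.apps (.name r.head) ts ∧ r.rhs.inst ts = some N

/-- Multi-step evaluation `M →*_P N`. -/
def Steps (P : Program) : Tm → Tm → Prop := Relation.ReflTransGen (Step P)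

/-- `M` is final: it has no successor. -/
def Final (P : Program) (M : Tm) : Prop := ¬ ∃ N, Step P M N

/-- `M` terminates: it evaluates to a final term. -/
def Terminates (P : Program) (M : Tm) : Prop := ∃ N, Steps P M N ∧ Final P N

/-- The name `m` occurs in a term. -/
def Tm.HasName (m : ℕ) : Tm → Prop
  | .name n => n = m
  | .dot a b => a.HasName m ∨ b.HasName m

/-- The name `m` occurs in a right-hand side. -/
def Rhs.HasName (m : ℕ) : Rhs → Prop
  | .name n => n = m
  | .var _ => False
  | .dot a b => a.HasName m ∨ b.HasName m

/-- The name `m` occurs (is mentioned) in a program. -/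
def Program.HasName (P : Program) (m : ℕ) : Prop :=
  ∃ r ∈ P, r.head = m ∨ r.rhs.HasName m

/-- The name `m` is defined by the program (is the head of some rule). -/
def Program.Defines (P : Program) (m : ℕ) : Prop :=
  ∃ r ∈ P, r.head = m

/-- Substitution of a term for a name, `M[fr := t]`. -/
def Tm.subName (m : ℕ) (t : Tm) : Tm → Tm
  | .name n => if n = m then t else .name n
  | .dot a b => .dot (Tm.subName m t a) (Tm.subName m t b)

/-- Common reduct relation `M =_P N`. -/
def CommonRed (P : Program) (M N : Tm) : Prop :=
  ∃ t, Steps P M t ∧ Steps P N t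

/-- Observational equivalence `M ≈_P N`. -/
def ObsEq (P : Program) (M N : Tm) : Prop :=
  ∀ P' : Program, P'.Wf → P ⊆ P' →
    ∀ X : Tm, (Terminates P' (X.dot M) ↔ Terminates P' (X.dot N))

/-- Renaming of names in a term. -/
def Tm.rename (f : ℕ → ℕ) : Tm → Tm
  | .name n => .name (f n)
  | .dot a b => .dot (a.rename f) (b.rename f)

/-- Renaming of names in a right-hand side. -/
def Rhs.rename (f : ℕ → ℕ) : Rhs → Rhs
  | .name n => .name (f n)
  | .var v => .var v
  | .dot a b => .dot (a.rename f) (b.rename f)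

/-- Renaming of names in a rule. -/
def Rule.rename (f : ℕ → ℕ) (r : Rule) : Rule :=
  ⟨f r.head, r.arity, r.rhs.rename f⟩

/-- Renaming of names in a program. -/
def Program.rename (f : ℕ → ℕ) (P : Program) : Program :=
  P.image (Rule.rename f)

/-- The fresh substitution `[n⃗ := m⃗]` as a function on names. -/
def renFun (ns ms : List ℕ) (n : ℕ) : ℕ :=
  ((ns.zip ms).lookup n).getD n

/-- `M` has arity `k` under `P`: `M = n.q₁.⋯.qᵢ` where `n` has a rule of
arity `i + k`. -/
def Tm.ArityIs (P : Program) (M : Tm) (k : ℕ) : Prop :=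
  ∃ r ∈ P, ∃ ts : List Tm, M = Tm.apps (.name r.head) ts ∧ ts.length + k = r.arity

/-- The rule `Zero.z.s → z`, with `Zero` coded as name `0`. -/
def zeroRule : Rule := ⟨0, 2, Rhs.var 0⟩

/-- The rule `S.x.z.s → s.x`, with `S` coded as name `1`. -/
def succRule : Rule := ⟨1, 3, Rhs.dot (.var 2) (.var 0)⟩

/-- The standard numeral `⟨k⟩`: `⟨0⟩ = Zero`, `⟨k+1⟩ = S.⟨k⟩`. -/
def numeral : ℕ → Tm
  | 0 => .name 0
  | k + 1 => (Tm.name 1).dot (numeral k)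

/-- The behavioral naturals `⟦ℕ⟧`: least set of terms `M` such that either
`M.z.s →* z` for all `z, s`, or there is an `x ∈ ⟦ℕ⟧` with
`M.z.s →* s.x` for all `z, s`. -/
inductive BehNat (P : Program) : Tm → Prop
  | zero (M : Tm) (h : ∀ z s : Tm, Steps P ((M.dot z).dot s) z) : BehNat P M
  | succ (M x : Tm) (hx : BehNat P x)
      (h : ∀ z s : Tm, Steps P ((M.dot z).dot s) (s.dot x)) : BehNat P M

/-!
A behavioral natural `M` with `M.z.s →* z` has arity two and shares the reduct `z` with
`Zero.z.s`; one with `M.z.s →* s.x` shares the reduct `s.x` with `S.x.z.s`. So it suffices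
to know that two terms of equal arity with common reducts on all argument lists are
observationally equivalent, and that `≈` is a congruence; induction on `⟦ℕ⟧` then finishes.

For the first fact, reduce `M.c⃗` and `N.c⃗` on fresh names `c⃗` to a common reduct `r`;
substituting arguments for `c⃗` gives `M.t⃗ →⁺ r[c⃗ := t⃗]` and `N.t⃗ →⁺ r[c⃗ := t⃗]` for all `t⃗`.
Hence replacing occurrences of `M` by `N` is a bisimulation in which both sides make
progress, and determinism of evaluation transports termination along it. For the congruence, a
fresh rule `c.w → X.(f.w)`, harmless for `c`-free terms, turns the context `X.(f.□)` into
the context `c.□`.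
-/

open Relation

namespace Tm

lemma apps_append (h : Tm) (l₁ l₂ : List Tm) : h.apps (l₁ ++ l₂) = (h.apps l₁).apps l₂ := by
  induction l₁ generalizing h with
  | nil => rfl
  | cons t ts ih => exact ih (h.dot t)

def headName : Tm → ℕ
  | .name n => n
  | .dot a _ => a.headName

def args : Tm → List Tm
  | .name _ => []
  | .dot a b => a.args ++ [b]

lemma headName_apps (h : Tm) (ts : List Tm) : (h.apps ts).headName = h.headName := by
  induction ts generalizing h with
  | nil => rfl
  | cons t ts ih => exact ih (h.dot t)

lemma args_apps (h : Tm) (ts : List Tm) : (h.apps ts).args = h.args ++ ts := by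
  induction ts generalizing h with
  | nil => simp [apps]
  | cons t ts ih => simp [apps, ih (h.dot t), args]

lemma apps_headName_args (t : Tm) : (name t.headName).apps t.args = t := by
  induction t with
  | name n => rfl
  | dot a b iha _ => rw [args, apps_append, headName, iha]; rfl

lemma apps_name_inj {h h' : ℕ} {ts ts' : List Tm} (e : (name h).apps ts = (name h').apps ts') :
    h = h' ∧ ts = ts' := by
  constructor
  · simpa [headName_apps, headName] using congrArg headName e
  · simpa [args_apps, args] using congrArg args e

lemma apps_eq_name_apps (M : Tm) (as : List Tm) :
    M.apps as = (name M.headName).apps (M.args ++ as) := by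
  rw [apps_append, apps_headName_args]

lemma hasName_apps {h : Tm} {ts : List Tm} {m : ℕ} :
    (h.apps ts).HasName m ↔ h.HasName m ∨ ∃ s ∈ ts, s.HasName m := by
  induction ts generalizing h with
  | nil => simp [apps]
  | cons t ts ih =>
      simp only [apps, ih, HasName, List.mem_cons, exists_eq_or_imp]
      tauto

end Tm

lemma Tm.finite_setOf_hasName (t : Tm) : {n | t.HasName n}.Finite := by
  induction t with
  | name m => simp [Tm.HasName]
  | dot _ _ iha ihb => exact iha.union ihb

lemma Rhs.finite_setOf_hasName (r : Rhs) : {n | r.HasName n}.Finite := by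
  induction r with
  | name m => simp [Rhs.HasName]
  | var _ => simp [Rhs.HasName]
  | dot _ _ iha ihb => exact iha.union ihb

lemma Program.finite_setOf_hasName (P : Program) : {n | P.HasName n}.Finite :=
  (P.finite_toSet.biUnion fun r _ => r.rhs.finite_setOf_hasName.insert r.head).subset
    fun _ ⟨_, hr, h⟩ => Set.mem_biUnion hr (h.imp Eq.symm id)

lemma exists_fresh (P : Program) (ts : List Tm) :
    ∃ c, ∀ n, (P.HasName n ∨ ∃ t ∈ ts, t.HasName n) → n < c := by
  obtain ⟨b, hb⟩ := (P.finite_setOf_hasName.union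
    (ts.finite_toSet.biUnion fun t _ => t.finite_setOf_hasName)).bddAbove
  exact ⟨b + 1, fun n hn => Nat.lt_succ_of_le (hb (by simpa using hn))⟩

section Evaluation

variable {P P' : Program}

lemma Step.mono (hPP' : P ⊆ P') {t u : Tm} (h : Step P t u) : Step P' t u := by
  obtain ⟨r, hr, h⟩ := h
  exact ⟨r, hPP' hr, h⟩

lemma Step.det (hP : P.Wf) {t u v : Tm} (h₁ : Step P t u) (h₂ : Step P t v) : u = v := by
  obtain ⟨r₁, hr₁, ts₁, -, rfl, hi₁⟩ := h₁
  obtain ⟨r₂, hr₂, ts₂, -, he, hi₂⟩ := h₂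
  obtain ⟨hh, rfl⟩ := Tm.apps_name_inj he
  obtain rfl := hP.2 r₁ hr₁ r₂ hr₂ hh
  exact Option.some.inj (hi₁.symm.trans hi₂)

lemma final_name_apps {hd : ℕ} {ts : List Tm}
    (H : ∀ r ∈ P, r.head = hd → r.arity ≠ ts.length) : Final P ((Tm.name hd).apps ts) := by
  rintro ⟨u, r, hr, ss, hl, he, -⟩
  obtain ⟨hh, rfl⟩ := Tm.apps_name_inj he
  exact H r hr hh.symm hl.symm

lemma Rhs.exists_inst {rhs : Rhs} {ts : List Tm} (h : ∀ v, rhs.HasVar v → v < ts.length) :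
    ∃ u, rhs.inst ts = some u := by
  induction rhs with
  | name n => exact ⟨_, rfl⟩
  | var v => exact ⟨_, List.getElem?_eq_getElem (h v rfl)⟩
  | dot a b iha ihb =>
      obtain ⟨ua, ha⟩ := iha fun v hv => h v (Or.inl hv)
      obtain ⟨ub, hb⟩ := ihb fun v hv => h v (Or.inr hv)
      exact ⟨ua.dot ub, by simp [Rhs.inst, ha, hb]⟩

lemma exists_step_name_apps (hP : P.Wf) {r : Rule} (hr : r ∈ P) {ts : List Tm}
    (hts : ts.length = r.arity) : ∃ u, Step P ((Tm.name r.head).apps ts) u := by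
  obtain ⟨u, hu⟩ := Rhs.exists_inst fun v hv => hts ▸ hP.1 r hr v hv
  exact ⟨u, r, hr, ts, hts, rfl, hu⟩

lemma Step.terminates_iff (hP : P.Wf) {t u : Tm} (h : Step P t u) :
    Terminates P t ↔ Terminates P u := by
  constructor
  · rintro ⟨F, hs, hF⟩
    rcases hs.cases_head with rfl | ⟨v, hv, hvF⟩
    · exact absurd ⟨u, h⟩ hF
    · exact ⟨F, h.det hP hv ▸ hvF, hF⟩
  · rintro ⟨F, hs, hF⟩
    exact ⟨F, .head h hs, hF⟩

/-- Well-formed programs are deterministic, so a terminating term is strongly normalizing. -/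
lemma acc_of_terminates (hP : P.Wf) {t : Tm} (h : Terminates P t) :
    Acc (flip (Step P)) t := by
  obtain ⟨F, hs, hF⟩ := h
  induction hs using ReflTransGen.head_induction_on with
  | refl => exact ⟨F, fun u hu => absurd ⟨u, hu⟩ hF⟩
  | head hab _ ih => exact ⟨_, fun u hu => hab.det hP hu ▸ ih⟩

lemma CommonRed.exists_transGen {t t' : Tm} (h : CommonRed P t t')
    (ht : ∃ u, Step P t u) (ht' : ∃ u, Step P t' u) :
    ∃ v, TransGen (Step P) t v ∧ TransGen (Step P) t' v := by
  obtain ⟨r, hr, hr'⟩ := h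
  by_cases hfin : ∃ v, Step P r v
  · obtain ⟨v, hv⟩ := hfin
    exact ⟨v, .tail' hr hv, .tail' hr' hv⟩
  · have ne : ∀ {s}, (∃ u, Step P s u) → r ≠ s := fun hs e => hfin (e ▸ hs)
    exact ⟨r, (reflTransGen_iff_eq_or_transGen.1 hr).resolve_left (ne ht),
      (reflTransGen_iff_eq_or_transGen.1 hr').resolve_left (ne ht')⟩

end Evaluation

section Arity

variable {P : Program} {M : Tm} {k : ℕ}

lemma Tm.ArityIs.mono {P' : Program} (hPP' : P ⊆ P') (hM : M.ArityIs P k) : M.ArityIs P' k :=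
  let ⟨r, hr, h⟩ := hM
  ⟨r, hPP' hr, h⟩

lemma Tm.ArityIs.exists_step (hP : P.Wf) (hM : M.ArityIs P k) {as : List Tm}
    (has : as.length = k) : ∃ u, Step P (M.apps as) u := by
  obtain ⟨r, hr, ts, rfl, hl⟩ := hM
  rw [← Tm.apps_append]
  exact exists_step_name_apps hP hr (by simp [← hl, has])

lemma Tm.ArityIs.final_apps (hP : P.Wf) (hM : M.ArityIs P k) {as : List Tm}
    (has : as.length ≠ k) : Final P (M.apps as) := by
  obtain ⟨r, hr, ts, rfl, hl⟩ := hM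
  rw [← Tm.apps_append]
  refine final_name_apps fun r' hr' hh => ?_
  rw [hP.2 r' hr' r hr hh, ← hl, List.length_append]
  omega

lemma Tm.arityIs_of_steps {as : List Tm} {u : Tm} (h : Steps P (M.apps as) u)
    (hne : M.apps as ≠ u) : M.ArityIs P as.length := by
  obtain ⟨v, ⟨r, hr, ts, hl, he, -⟩, -⟩ := h.cases_head.resolve_left hne
  rw [Tm.apps_eq_name_apps] at he
  obtain ⟨hh, rfl⟩ := Tm.apps_name_inj he
  exact ⟨r, hr, M.args, by rw [← hh, Tm.apps_headName_args], by simpa using hl⟩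

end Arity

section Substitution

def Tm.subst (σ : ℕ → Tm) : Tm → Tm
  | .name n => σ n
  | .dot a b => .dot (a.subst σ) (b.subst σ)

variable {σ : ℕ → Tm}

lemma Tm.subst_apps (h : Tm) (ts : List Tm) :
    (h.apps ts).subst σ = (h.subst σ).apps (ts.map (Tm.subst σ)) := by
  induction ts generalizing h with
  | nil => rfl
  | cons t ts ih => exact ih (h.dot t)

lemma Tm.subst_eq_self {t : Tm} (h : ∀ n, t.HasName n → σ n = .name n) : t.subst σ = t := by
  induction t with
  | name n => exact h n rfl
  | dot a b iha ihb =>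
      rw [subst, iha fun n hn => h n (Or.inl hn), ihb fun n hn => h n (Or.inr hn)]

lemma Rhs.inst_map_subst {rhs : Rhs} (hσ : ∀ n, rhs.HasName n → σ n = .name n)
    {ts : List Tm} {u : Tm} (hu : rhs.inst ts = some u) :
    rhs.inst (ts.map (Tm.subst σ)) = some (u.subst σ) := by
  induction rhs generalizing u with
  | name n =>
      cases hu
      exact congrArg some (hσ n rfl).symm
  | var v =>
      simp only [Rhs.inst, List.getElem?_map] at hu ⊢
      rw [hu]; rfl
  | dot a b iha ihb =>
      simp only [Rhs.inst, Option.bind_eq_bind, Option.bind_eq_some_iff, Option.pure_def,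
        Option.some.injEq] at hu ⊢
      obtain ⟨ua, ha, ub, hb, rfl⟩ := hu
      exact ⟨_, iha (fun n hn => hσ n (Or.inl hn)) ha, _,
        ihb (fun n hn => hσ n (Or.inr hn)) hb, rfl⟩

lemma Step.subst {P : Program} (hσ : ∀ n, P.HasName n → σ n = .name n) {t u : Tm}
    (h : Step P t u) : Step P (t.subst σ) (u.subst σ) := by
  obtain ⟨r, hr, ts, hl, rfl, hi⟩ := h
  refine ⟨r, hr, ts.map (Tm.subst σ), by simpa using hl, ?_,
    Rhs.inst_map_subst (fun n hn => hσ n ⟨r, hr, Or.inr hn⟩) hi⟩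
  rw [Tm.subst_apps, Tm.subst, hσ r.head ⟨r, hr, Or.inl rfl⟩]

/-- `freshInst c ts` sends the name `c + i` to `ts[i]` and fixes every other name. -/
def freshInst : ℕ → List Tm → ℕ → Tm
  | _, [], n => .name n
  | c, t :: ts, n => if n = c then t else freshInst (c + 1) ts n

lemma freshInst_of_lt {c n : ℕ} (ts : List Tm) (h : n < c) : freshInst c ts n = .name n := by
  induction ts generalizing c with
  | nil => rfl
  | cons t ts ih => rw [freshInst, if_neg h.ne, ih (Nat.lt_succ_of_lt h)]

lemma map_subst_freshInst (c : ℕ) (ts : List Tm) :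
    ((List.range' c ts.length).map Tm.name).map (Tm.subst (freshInst c ts)) = ts := by
  induction ts generalizing c with
  | nil => rfl
  | cons t ts ih =>
      rw [List.length_cons, List.range'_succ, List.map_cons, List.map_cons, Tm.subst, freshInst,
        if_pos rfl]
      refine congrArg (t :: ·) ((List.map_congr_left fun x hx => ?_).trans (ih (c + 1)))
      obtain ⟨n, hn, rfl⟩ := List.mem_map.1 hx
      rw [Tm.subst, Tm.subst, freshInst, if_neg (Nat.ne_of_gt (List.mem_range'_1.1 hn).1)]

lemma Tm.apps_subst_freshInst {c : ℕ} {L : Tm} (hL : ∀ n, L.HasName n → n < c) (ts : List Tm) :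
    (L.apps ((List.range' c ts.length).map .name)).subst (freshInst c ts) = L.apps ts := by
  rw [subst_apps, map_subst_freshInst, subst_eq_self fun n hn => freshInst_of_lt ts (hL n hn)]

end Substitution

section Replacement

inductive Tm.Replace (M N : Tm) : Tm → Tm → Prop
  | refl (t : Tm) : Tm.Replace M N t t
  | base : Tm.Replace M N M N
  | dot {a a' b b' : Tm} : Tm.Replace M N a a' → Tm.Replace M N b b' →
      Tm.Replace M N (a.dot b) (a'.dot b')

variable {M N : Tm}

namespace Tm.Replace

lemma spine {t t' : Tm} (h : Replace M N t t') :
    (∃ as as', List.Forall₂ (Replace M N) as as' ∧ t = M.apps as ∧ t' = N.apps as') ∨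
    (∃ hd ts ts', List.Forall₂ (Replace M N) ts ts' ∧
      t = (name hd).apps ts ∧ t' = (name hd).apps ts') := by
  induction h with
  | refl t =>
      exact .inr ⟨t.headName, t.args, t.args, List.forall₂_same.2 fun x _ => refl x,
        (apps_headName_args t).symm, (apps_headName_args t).symm⟩
  | base => exact .inl ⟨[], [], .nil, rfl, rfl⟩
  | @dot a a' b b' _ hb ih _ =>
      have hb' : List.Forall₂ (Replace M N) [b] [b'] := .cons hb .nil
      rcases ih with ⟨as, as', hrel, rfl, rfl⟩ | ⟨hd, ts, ts', hrel, rfl, rfl⟩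
      · exact .inl ⟨as ++ [b], as' ++ [b'], List.rel_append hrel hb',
          by rw [apps_append]; rfl, by rw [apps_append]; rfl⟩
      · exact .inr ⟨hd, ts ++ [b], ts' ++ [b'], List.rel_append hrel hb',
          by rw [apps_append]; rfl, by rw [apps_append]; rfl⟩

lemma subst {σ σ' : ℕ → Tm} (h : ∀ n, Replace M N (σ n) (σ' n)) (t : Tm) :
    Replace M N (t.subst σ) (t.subst σ') := by
  induction t with
  | name n => exact h n
  | dot _ _ iha ihb => exact dot iha ihb

lemma freshInst {ts ts' : List Tm} (h : List.Forall₂ (Replace M N) ts ts') (c n : ℕ) :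
    Replace M N (_root_.freshInst c ts n) (_root_.freshInst c ts' n) := by
  induction h generalizing c with
  | nil => exact refl _
  | cons hab _ ih =>
      simp only [_root_.freshInst]
      split_ifs
      exacts [hab, ih (c + 1)]

end Tm.Replace

lemma Rhs.inst_replace {ts ts' : List Tm} (h : List.Forall₂ (Tm.Replace M N) ts ts')
    {rhs : Rhs} {u : Tm} (hu : rhs.inst ts = some u) :
    ∃ u', rhs.inst ts' = some u' ∧ Tm.Replace M N u u' := by
  induction rhs generalizing u with
  | name n =>
      cases hu
      exact ⟨_, rfl, .refl _⟩
  | var v =>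
      obtain ⟨hlen, hget⟩ := List.forall₂_iff_get.1 h
      obtain ⟨hv, rfl⟩ := List.getElem?_eq_some_iff.1 hu
      exact ⟨_, List.getElem?_eq_getElem (hlen ▸ hv), hget v hv (hlen ▸ hv)⟩
  | dot a b iha ihb =>
      simp only [Rhs.inst, Option.bind_eq_bind, Option.bind_eq_some_iff, Option.pure_def,
        Option.some.injEq] at hu ⊢
      obtain ⟨ua, ha, ub, hb, rfl⟩ := hu
      obtain ⟨ua', ha', hra⟩ := iha ha
      obtain ⟨ub', hb', hrb⟩ := ihb hb
      exact ⟨ua'.dot ub', ⟨ua', ha', ub', hb', rfl⟩, .dot hra hrb⟩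

end Replacement

section Bisimulation

variable {P : Program}

def IsProgressBisim (P : Program) (R : Tm → Tm → Prop) : Prop :=
  ∀ t t', R t t' → (Final P t ∧ Final P t') ∨
    ∃ u u', TransGen (Step P) t u ∧ TransGen (Step P) t' u' ∧ R u u'

namespace IsProgressBisim

variable {R : Tm → Tm → Prop}

lemma swap (hR : IsProgressBisim P R) : IsProgressBisim P (flip R) := by
  intro t t' h
  rcases hR t' t h with ⟨h₁, h₂⟩ | ⟨u, u', h₁, h₂, hu⟩
  exacts [.inl ⟨h₂, h₁⟩, .inr ⟨u', u, h₂, h₁, hu⟩]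

/-- Induction along the strongly normalizing `t`: progress on both sides keeps related pairs
inside its (transitive) reduction tree. -/
lemma terminates (hP : P.Wf) (hR : IsProgressBisim P R) {t t' : Tm} (h : R t t')
    (ht : Terminates P t) : Terminates P t' := by
  have hacc := (acc_of_terminates hP ht).transGen
  clear ht
  induction hacc generalizing t' with
  | intro t _ ih =>
    rcases hR t t' h with ⟨-, hF⟩ | ⟨u, u', htu, htu', hu⟩
    · exact ⟨t', .refl, hF⟩
    · obtain ⟨G, hG, hGF⟩ := ih u (transGen_swap.2 htu) hu
      exact ⟨G, htu'.to_reflTransGen.trans hG, hGF⟩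

end IsProgressBisim

variable {M N : Tm} {k : ℕ}

lemma isProgressBisim_replace (hP : P.Wf) (hM : M.ArityIs P k) (hN : N.ArityIs P k)
    (hred : ∀ as as', as.length = k → List.Forall₂ (Tm.Replace M N) as as' →
      ∃ u u', TransGen (Step P) (M.apps as) u ∧ TransGen (Step P) (N.apps as') u' ∧
        Tm.Replace M N u u') :
    IsProgressBisim P (Tm.Replace M N) := by
  intro t t' h
  rcases h.spine with ⟨as, as', hrel, rfl, rfl⟩ | ⟨hd, ts, ts', hrel, rfl, rfl⟩
  · by_cases has : as.length = k
    · exact .inr (hred as as' has hrel)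
    · exact .inl ⟨hM.final_apps hP has, hN.final_apps hP (hrel.length_eq ▸ has)⟩
  · by_cases hr : ∃ r ∈ P, r.head = hd ∧ r.arity = ts.length
    · obtain ⟨r, hr, rfl, hl⟩ := hr
      obtain ⟨u, hu⟩ := Rhs.exists_inst fun v hv => hl ▸ hP.1 r hr v hv
      obtain ⟨u', hu', hrel'⟩ := Rhs.inst_replace hrel hu
      exact .inr ⟨u, u', .single ⟨r, hr, ts, hl.symm, rfl, hu⟩,
        .single ⟨r, hr, ts', (hrel.length_eq ▸ hl).symm, rfl, hu'⟩, hrel'⟩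
    · push Not at hr
      exact .inl ⟨final_name_apps hr, final_name_apps (hrel.length_eq ▸ hr)⟩

lemma exists_transGen_replace_of_commonRed (hP : P.Wf) (hM : M.ArityIs P k)
    (hN : N.ArityIs P k)
    (h : ∀ ts : List Tm, ts.length = k → CommonRed P (M.apps ts) (N.apps ts))
    {as as' : List Tm} (has : as.length = k) (hrel : List.Forall₂ (Tm.Replace M N) as as') :
    ∃ u u', TransGen (Step P) (M.apps as) u ∧ TransGen (Step P) (N.apps as') u' ∧
      Tm.Replace M N u u' := by
  obtain ⟨c, hc⟩ := exists_fresh P [M, N]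
  have hσ (ts : List Tm) : ∀ n, P.HasName n → freshInst c ts n = .name n :=
    fun n hn => freshInst_of_lt ts (hc n (.inl hn))
  have hns : ((List.range' c k).map Tm.name).length = k := by simp
  obtain ⟨r, hMr, hNr⟩ :=
    (h _ hns).exists_transGen (hM.exists_step hP hns) (hN.exists_step hP hns)
  subst has
  refine ⟨r.subst (freshInst c as), r.subst (freshInst c as'), ?_, ?_,
    .subst (.freshInst hrel c) r⟩
  · rw [← Tm.apps_subst_freshInst (fun n hn => hc n (.inr ⟨M, by simp, hn⟩)) as]
    exact TransGen.lift (Tm.subst _) (fun _ _ => Step.subst (hσ as)) _ _ hMr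
  · rw [← Tm.apps_subst_freshInst (fun n hn => hc n (.inr ⟨N, by simp, hn⟩)) as',
      ← hrel.length_eq]
    exact TransGen.lift (Tm.subst _) (fun _ _ => Step.subst (hσ as')) _ _ hNr

theorem obsEq_of_commonRed (hP : P.Wf) (hM : M.ArityIs P k) (hN : N.ArityIs P k)
    (h : ∀ ts : List Tm, ts.length = k → CommonRed P (M.apps ts) (N.apps ts)) :
    ObsEq P M N := by
  intro P' hP' hPP' X
  have lift : TransGen (Step P) ≤ TransGen (Step P') := TransGen.mono fun _ _ => Step.mono hPP'
  have hB := isProgressBisim_replace hP' (hM.mono hPP') (hN.mono hPP') fun as as' has hrel =>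
    let ⟨u, u', hu, hu', hrel'⟩ := exists_transGen_replace_of_commonRed hP hM hN h has hrel
    ⟨u, u', lift _ _ hu, lift _ _ hu', hrel'⟩
  have hX : Tm.Replace M N (X.dot M) (X.dot N) := .dot (.refl X) .base
  exact ⟨hB.terminates hP' hX, hB.swap.terminates hP' hX⟩

end Bisimulation

section Congruence

variable {P : Program}

lemma Rhs.not_hasName_of_inst {c : ℕ} {rhs : Rhs} (hc : ¬ rhs.HasName c) {ts : List Tm}
    (hts : ∀ s ∈ ts, ¬ s.HasName c) {u : Tm} (hu : rhs.inst ts = some u) :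
    ¬ u.HasName c := by
  induction rhs generalizing u with
  | name n =>
      cases hu
      exact hc
  | var v => exact hts u (List.mem_of_getElem? hu)
  | dot a b iha ihb =>
      simp only [Rhs.inst, Option.bind_eq_bind, Option.bind_eq_some_iff, Option.pure_def,
        Option.some.injEq] at hu
      obtain ⟨ua, ha, ub, hb, rfl⟩ := hu
      exact fun h => h.elim (iha (fun h => hc (.inl h)) ha) (ihb (fun h => hc (.inr h)) hb)

lemma Step.not_hasName {c : ℕ} (hc : ¬ P.HasName c) {t u : Tm} (h : Step P t u)
    (ht : ¬ t.HasName c) : ¬ u.HasName c := by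
  obtain ⟨r, hr, ts, -, rfl, hi⟩ := h
  exact Rhs.not_hasName_of_inst (fun h => hc ⟨r, hr, .inr h⟩)
    (fun s hs h => ht (Tm.hasName_apps.2 (.inr ⟨s, hs, h⟩))) hi

lemma Steps.not_hasName {c : ℕ} (hc : ¬ P.HasName c) {t u : Tm} (h : Steps P t u)
    (ht : ¬ t.HasName c) : ¬ u.HasName c := by
  induction h with
  | refl => exact ht
  | tail _ hs ih => exact hs.not_hasName hc ih

lemma Step.of_insert {r : Rule} {t u : Tm} (h : Step (insert r P) t u)
    (ht : ¬ t.HasName r.head) : Step P t u := by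
  obtain ⟨r', hr', ts, hl, rfl, hi⟩ := h
  rcases Finset.mem_insert.1 hr' with rfl | hr'
  · exact (ht (Tm.hasName_apps.2 (.inl rfl))).elim
  · exact ⟨r', hr', ts, hl, rfl, hi⟩

lemma Steps.of_insert {r : Rule} (hc : ¬ P.HasName r.head) {t u : Tm}
    (h : Steps (insert r P) t u) (ht : ¬ t.HasName r.head) : Steps P t u := by
  induction h with
  | refl => exact .refl
  | tail _ hs ih => exact .tail ih (hs.of_insert (ih.not_hasName hc ht))

lemma terminates_insert_iff {r : Rule} (hc : ¬ P.HasName r.head) {t : Tm}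
    (ht : ¬ t.HasName r.head) : Terminates (insert r P) t ↔ Terminates P t := by
  have hsub := Finset.subset_insert r P
  constructor
  · rintro ⟨F, hs, hF⟩
    exact ⟨F, hs.of_insert hc ht, fun ⟨u, hu⟩ => hF ⟨u, hu.mono hsub⟩⟩
  · rintro ⟨F, hs, hF⟩
    exact ⟨F, ReflTransGen.mono (fun _ _ => Step.mono hsub) _ _ hs,
      fun ⟨u, hu⟩ => hF ⟨u, hu.of_insert (hs.not_hasName hc ht)⟩⟩

lemma Program.Wf.insert {r : Rule} (hP : P.Wf) (hvar : ∀ v, r.rhs.HasVar v → v < r.arity)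
    (hr : ¬ P.Defines r.head) : (insert r P).Wf := by
  constructor
  · intro r' hr' v hv
    rcases Finset.mem_insert.1 hr' with rfl | hr'
    exacts [hvar v hv, hP.1 r' hr' v hv]
  · intro r₁ h₁ r₂ h₂ hh
    rcases Finset.mem_insert.1 h₁ with e₁ | h₁ <;> rcases Finset.mem_insert.1 h₂ with e₂ | h₂
    · exact e₁.trans e₂.symm
    · exact absurd ⟨r₂, h₂, e₁ ▸ hh.symm⟩ hr
    · exact absurd ⟨r₁, h₁, e₂ ▸ hh⟩ hr
    · exact hP.2 r₁ h₁ r₂ h₂ hh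

def Tm.toRhs : Tm → Rhs
  | .name n => .name n
  | .dot a b => .dot a.toRhs b.toRhs

lemma Tm.not_hasVar_toRhs (t : Tm) (v : ℕ) : ¬ t.toRhs.HasVar v := by
  induction t with
  | name n => exact id
  | dot a b iha ihb => exact fun h => h.elim iha ihb

lemma Tm.inst_toRhs (t : Tm) (ts : List Tm) : t.toRhs.inst ts = some t := by
  induction t with
  | name n => rfl
  | dot a b iha ihb => simp [toRhs, Rhs.inst, iha, ihb]

lemma ObsEq.trans {x y z : Tm} (h₁ : ObsEq P x y) (h₂ : ObsEq P y z) : ObsEq P x z :=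
  fun P' hP' hPP' X => (h₁ P' hP' hPP' X).trans (h₂ P' hP' hPP' X)

lemma ObsEq.dot_left {x y : Tm} (f : Tm) (h : ObsEq P x y) : ObsEq P (f.dot x) (f.dot y) := by
  intro P' hP' hPP' X
  obtain ⟨c, hc⟩ := exists_fresh P' [X, f, x, y]
  have hcP' : ¬ P'.HasName c := fun h => lt_irrefl c (hc c (.inl h))
  have fresh : ∀ t ∈ [X, f, x, y], ¬ t.HasName c :=
    fun t ht h => lt_irrefl c (hc c (.inr ⟨t, ht, h⟩))
  let ρ : Rule := ⟨c, 1, .dot X.toRhs (.dot f.toRhs (.var 0))⟩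
  have hwf : (insert ρ P').Wf := hP'.insert
    (by
      rintro v (h | h | h)
      exacts [(X.not_hasVar_toRhs v h).elim, (f.not_hasVar_toRhs v h).elim, h ▸ one_pos])
    fun ⟨r, hr, hh⟩ => hcP' ⟨r, hr, .inl hh⟩
  have hstep (w : Tm) : Step (insert ρ P') ((Tm.name c).dot w) (X.dot (f.dot w)) :=
    ⟨ρ, Finset.mem_insert_self _ _, [w], rfl, rfl, by simp [ρ, Rhs.inst, Tm.inst_toRhs]⟩
  have hfree (w : Tm) (hw : w ∈ [X, f, x, y]) : ¬ (X.dot (f.dot w)).HasName c := by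
    rintro (h | h | h)
    exacts [fresh X (by simp) h, fresh f (by simp) h, fresh w hw h]
  calc Terminates P' (X.dot (f.dot x))
      ↔ Terminates (insert ρ P') (X.dot (f.dot x)) :=
        (terminates_insert_iff hcP' (hfree x (by simp))).symm
    _ ↔ Terminates (insert ρ P') ((Tm.name c).dot x) := ((hstep x).terminates_iff hwf).symm
    _ ↔ Terminates (insert ρ P') ((Tm.name c).dot y) :=
        h _ hwf (hPP'.trans (Finset.subset_insert _ _)) (.name c)
    _ ↔ Terminates (insert ρ P') (X.dot (f.dot y)) := (hstep y).terminates_iff hwf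
    _ ↔ Terminates P' (X.dot (f.dot y)) := terminates_insert_iff hcP' (hfree y (by simp))

end Congruence

section Numerals

variable {P : Program} {M : Tm}

lemma obsEq_numeral_zero_of_steps (hP : P.Wf) (hZero : zeroRule ∈ P)
    (hz : ∀ z s : Tm, Steps P ((M.dot z).dot s) z) : ObsEq P M (numeral 0) := by
  have hM : M.ArityIs P 2 := Tm.arityIs_of_steps (as := [.name 0, .name 0]) (hz _ _) nofun
  refine obsEq_of_commonRed hP hM ⟨zeroRule, hZero, [], rfl, rfl⟩ fun ts hts => ?_
  obtain ⟨a, b, rfl⟩ := List.length_eq_two.1 hts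
  exact ⟨a, hz a b, .single ⟨zeroRule, hZero, [a, b], rfl, rfl, rfl⟩⟩

lemma obsEq_S_of_steps (hP : P.Wf) (hS : succRule ∈ P) {x : Tm}
    (hs : ∀ z s : Tm, Steps P ((M.dot z).dot s) (s.dot x)) :
    ObsEq P M ((Tm.name 1).dot x) := by
  have hM : M.ArityIs P 2 := Tm.arityIs_of_steps (as := [.name 0, .name 0]) (hs _ _) nofun
  refine obsEq_of_commonRed hP hM ⟨succRule, hS, [x], rfl, rfl⟩ fun ts hts => ?_
  obtain ⟨a, b, rfl⟩ := List.length_eq_two.1 hts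
  exact ⟨b.dot x, hs a b, .single ⟨succRule, hS, [x, a, b], rfl, rfl, rfl⟩⟩

end Numerals

theorem behNat_obsEq_numeral (P : Program) (hP : P.Wf)
    (hZero : zeroRule ∈ P) (hS : succRule ∈ P)
    (M : Tm) (hM : BehNat P M) :
    ∃ k : ℕ, ObsEq P M (numeral k) := by
  induction hM with
  | zero M hz => exact ⟨0, obsEq_numeral_zero_of_steps hP hZero hz⟩
  | succ M x _ hs ih =>
      obtain ⟨k, hk⟩ := ih
      exact ⟨k + 1, (obsEq_S_of_steps hP hS hs).trans (hk.dot_left (.name 1))⟩
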